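/- arXiv:math/0309062 — 3 statements merged into one kernel-verified Lean document; each statement's English description precedes it below -/
import Mathlib

section
/- Let $X$ be a Banach space and $f : [a,b] \to X$ differentiable with Bochner-integrable derivative. Then for every $s \in [a,b]$: $\left\| f(s) - \frac{1}{b-a}\int_a^b f(t)\,dt \right\| \le \frac{1}{b-a}\left[\int_a^s (t-a)\|f'(t)\|\,dt + \int_s^b (b-t)\|f'(t)\|\,dt \right]$. -/
open MeasureTheory intervalIntegral Set
open scoped Interval

/-! Integrating `(t - a) • f'` by parts over `[a, s]` and `(t - b) • f'` over `[s, b]` gives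
Montgomery's identity: `f s` minus the mean of `f` is `(b - a)⁻¹` times the sum of the two
integrals. The bound is then the triangle inequality for integrals. -/

section MontgomeryIdentity

variable {X : Type*} [NormedAddCommGroup X] [NormedSpace ℝ X] [CompleteSpace X]
  {f f' : ℝ → X}

theorem integral_sub_smul_deriv {u v : ℝ} (c : ℝ) (hderiv : ∀ t ∈ [[u, v]], HasDerivAt f (f' t) t)
    (hint : IntervalIntegrable f' volume u v) :
    ∫ t in u..v, (t - c) • f' t = (v - c) • f v - (u - c) • f u - ∫ t in u..v, f t := by
  simpa only [one_smul, id_eq] using integral_smul_deriv_eq_deriv_smul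
    (fun t _ ↦ (hasDerivAt_id t).sub_const c) hderiv intervalIntegrable_const hint

theorem sub_average_eq_montgomery {a b s : ℝ} (hab : a ≠ b)
    (hderiv : ∀ t ∈ [[a, b]], HasDerivAt f (f' t) t) (hint : IntervalIntegrable f' volume a b)
    (hs : s ∈ [[a, b]]) :
    f s - (b - a)⁻¹ • ∫ t in a..b, f t =
      (b - a)⁻¹ • ((∫ t in a..s, (t - a) • f' t) + ∫ t in s..b, (t - b) • f' t) := by
  have has : [[a, s]] ⊆ [[a, b]] := uIcc_subset_uIcc_left hs
  have hsb : [[s, b]] ⊆ [[a, b]] := uIcc_subset_uIcc_right hs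
  have hf : IntervalIntegrable f volume a b :=
    (ContinuousOn.intervalIntegrable fun t ht ↦ (hderiv t ht).continuousAt.continuousWithinAt)
  rw [integral_sub_smul_deriv a (fun t ht ↦ hderiv t (has ht)) (hint.mono_set has),
    integral_sub_smul_deriv b (fun t ht ↦ hderiv t (hsb ht)) (hint.mono_set hsb),
    ← integral_add_adjacent_intervals (hf.mono_set has) (hf.mono_set hsb)]
  have hba : b - a ≠ 0 := sub_ne_zero.2 hab.symm
  rw [eq_inv_smul_iff₀ hba, smul_sub, smul_inv_smul₀ hba]
  simp only [sub_self, zero_smul, sub_zero, zero_sub, sub_smul]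
  abel

end MontgomeryIdentity

theorem norm_integral_smul_le {X : Type*} [NormedAddCommGroup X] [NormedSpace ℝ X]
    {u v : ℝ} (huv : u ≤ v) {w k : ℝ → ℝ} {g : ℝ → X} (hwk : ∀ t ∈ Icc u v, |w t| = k t) :
    ‖∫ t in u..v, w t • g t‖ ≤ ∫ t in u..v, k t * ‖g t‖ := by
  refine (intervalIntegral.norm_integral_le_integral_norm huv).trans_eq
    (integral_congr fun t ht ↦ ?_)
  rw [uIcc_of_le huv] at ht
  simp only [norm_smul, Real.norm_eq_abs, hwk t ht]

theorem stmt6 {X : Type*} [NormedAddCommGroup X] [NormedSpace ℝ X] [CompleteSpace X]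
    {a b : ℝ} (hab : a < b) {f f' : ℝ → X}
    (hderiv : ∀ t ∈ Set.Icc a b, HasDerivAt f (f' t) t)
    (hint : IntervalIntegrable f' volume a b) {s : ℝ} (hs : s ∈ Set.Icc a b) :
    ‖f s - (b - a)⁻¹ • (∫ t in a..b, f t)‖ ≤
      (b - a)⁻¹ * ((∫ t in a..s, (t - a) * ‖f' t‖) + (∫ t in s..b, (b - t) * ‖f' t‖)) := by
  have hI : [[a, b]] = Icc a b := uIcc_of_le hab.le
  rw [sub_average_eq_montgomery hab.ne (hI ▸ hderiv) hint (hI ▸ hs), norm_smul,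
    Real.norm_of_nonneg (inv_nonneg.2 (sub_nonneg.2 hab.le))]
  gcongr
  refine (norm_add_le _ _).trans (add_le_add ?_ ?_)
  · exact norm_integral_smul_le hs.1 fun t ht ↦ abs_of_nonneg (sub_nonneg.2 ht.1)
  · exact norm_integral_smul_le hs.2 fun t ht ↦ by rw [abs_of_nonpos (sub_nonpos.2 ht.2), neg_sub]
end

section
/- Let $X$ be a Banach space and $f : [a,b] \to X$ differentiable with $\|f'(t)\| \le M$ for all $t \in [a,b]$. Then $\left\| \int_a^b f(t)\,dt - (b-a)\cdot\frac{f(a)+f(b)}{2} \right\| \le \frac{1}{4}(b-a)^2 M$. -/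
/-!
Integrating by parts against the kernel `t - (a + b) / 2`, whose derivative is `1` and whose
values at `a` and `b` are `∓ (b - a) / 2`, turns the trapezoidal error into
`-∫ t in a..b, (t - (a + b) / 2) • f' t`. Its norm is at most
`M * ∫ t in a..b, |t - (a + b) / 2| = M * (b - a) ^ 2 / 4`.
-/

open MeasureTheory intervalIntegral Set

open scoped Interval

/- `f'` need not be continuous: it is integrable because it agrees with the measurable
function `deriv f` on the interval and is bounded there. -/
theorem intervalIntegrable_of_hasDerivAt_of_norm_le {E : Type*} [NormedAddCommGroup E]
    [NormedSpace ℝ E] [CompleteSpace E] {f f' : ℝ → E} {a b M : ℝ}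
    (hf : ∀ t ∈ [[a, b]], HasDerivAt f (f' t) t) (hf' : ∀ t ∈ [[a, b]], ‖f' t‖ ≤ M) :
    IntervalIntegrable f' volume a b := by
  rw [intervalIntegrable_iff]
  have h_ae : ∀ᵐ t ∂volume.restrict (Ι a b), t ∈ [[a, b]] :=
    ae_restrict_of_forall_mem measurableSet_uIoc fun t ht ↦ uIoc_subset_uIcc ht
  refine IntegrableOn.of_bound measure_Ioc_lt_top ?_ M (h_ae.mono hf')
  exact (aestronglyMeasurable_deriv f _).congr (h_ae.mono fun t ht ↦ (hf t ht).deriv)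

theorem integral_abs_sub_of_mem_Icc {a b c : ℝ} (hc : c ∈ Icc a b) :
    ∫ t in a..b, |t - c| = ((c - a) ^ 2 + (b - c) ^ 2) / 2 := by
  have h_int : Continuous fun t : ℝ ↦ |t - c| := by fun_prop
  rw [← integral_add_adjacent_intervals (h_int.intervalIntegrable a c)
      (h_int.intervalIntegrable c b),
    integral_of_le hc.1, integral_of_le hc.2, ← uIoc_of_le hc.2, ← uIoc_of_ge hc.1]
  have h_piece (d : ℝ) : ∫ t in Ι c d, |t - c| = (d - c) ^ 2 / 2 := by
    simpa [sq_abs, one_add_one_eq_two] using integral_pow_abs_sub_uIoc (a := c) (b := d) 1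
  rw [h_piece, h_piece]
  ring

theorem integral_sub_trapezoid_eq_neg_integral_smul_deriv {E : Type*} [NormedAddCommGroup E]
    [NormedSpace ℝ E] [CompleteSpace E] {f f' : ℝ → E} {a b : ℝ}
    (hf : ∀ t ∈ [[a, b]], HasDerivAt f (f' t) t) (hf' : IntervalIntegrable f' volume a b) :
    (∫ t in a..b, f t) - ((b - a) / 2) • (f a + f b) =
      -∫ t in a..b, (t - (a + b) / 2) • f' t := by
  rw [integral_smul_deriv_eq_deriv_smul (u := fun t ↦ t - (a + b) / 2)
    (fun t _ ↦ (hasDerivAt_id' t).sub_const _) hf intervalIntegrable_const hf']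
  have hb : b - (a + b) / 2 = (b - a) / 2 := by ring
  have ha : a - (a + b) / 2 = -((b - a) / 2) := by ring
  simp only [one_smul, hb, ha, neg_smul, smul_add]
  abel

theorem stmt10 {X : Type*} [NormedAddCommGroup X] [NormedSpace ℝ X] [CompleteSpace X]
    {a b : ℝ} (hab : a < b) {f f' : ℝ → X}
    (hderiv : ∀ t ∈ Set.Icc a b, HasDerivAt f (f' t) t)
    {M : ℝ} (hM : ∀ t ∈ Set.Icc a b, ‖f' t‖ ≤ M) :
    ‖(∫ t in a..b, f t) - ((b - a) / 2) • (f a + f b)‖ ≤ (1 / 4) * (b - a) ^ 2 * M := by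
  rw [← uIcc_of_le hab.le] at hderiv hM
  rw [integral_sub_trapezoid_eq_neg_integral_smul_deriv hderiv
    (intervalIntegrable_of_hasDerivAt_of_norm_le hderiv hM), norm_neg]
  calc ‖∫ t in a..b, (t - (a + b) / 2) • f' t‖
      ≤ ∫ t in a..b, |t - (a + b) / 2| * M := by
        refine norm_integral_le_of_norm_le hab.le (ae_of_all _ fun t ht ↦ ?_)
          (Continuous.intervalIntegrable (by fun_prop) a b)
        rw [norm_smul, Real.norm_eq_abs]
        exact mul_le_mul_of_nonneg_left (hM t (Icc_subset_uIcc (Ioc_subset_Icc_self ht)))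
          (abs_nonneg _)
    _ = (1 / 4) * (b - a) ^ 2 * M := by
        rw [intervalIntegral.integral_mul_const,
          integral_abs_sub_of_mem_Icc ⟨by linarith, by linarith⟩]
        ring
end

section
/- Let $X$ be a Banach space and $f : [a,b] \to X$ differentiable with Bochner-integrable derivative. Then $\left\| \int_a^b f(t)\,dt - (b-a)\left[\frac{f(a)+f(b)}{4} + \frac{1}{2}f\left(\frac{a+b}{2}\right)\right] \right\| \le \frac{1}{4}(b-a)\int_a^b \|f'(t)\|\,dt$. -/
/-!
The rule is the composite trapezoid rule on the two halves of `[a, b]`. On a single interval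
`[c, d]`, integrating by parts against the Peano kernel `t - (c + d) / 2` shows that the trapezoid
error is `-∫ (t - (c + d) / 2) • f' t`, and the kernel is bounded by half the length of the
interval. Adding the two halves gives the factor `(b - a) / 4`.
-/

open MeasureTheory intervalIntegral

section Trapezoid

variable {X : Type*} [NormedAddCommGroup X] [NormedSpace ℝ X] [CompleteSpace X]
  {c d : ℝ} {f f' : ℝ → X}

theorem integral_sub_trapezoid_eq_neg_integral_smul_deriv_s17
    (hderiv : ∀ t ∈ Set.uIcc c d, HasDerivAt f (f' t) t)
    (hint : IntervalIntegrable f' volume c d) :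
    (∫ t in c..d, f t) - ((d - c) / 2) • (f c + f d) =
      -∫ t in c..d, (t - (c + d) / 2) • f' t := by
  have hkernel : ∀ t ∈ Set.uIcc c d, HasDerivAt (fun t => t - (c + d) / 2) 1 t :=
    fun t _ => (hasDerivAt_id t).sub_const _
  rw [integral_smul_deriv_eq_deriv_smul hkernel hderiv intervalIntegrable_const hint]
  simp only [one_smul]
  module

theorem norm_integral_sub_trapezoid_le (hcd : c ≤ d)
    (hderiv : ∀ t ∈ Set.uIcc c d, HasDerivAt f (f' t) t)
    (hint : IntervalIntegrable f' volume c d) :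
    ‖(∫ t in c..d, f t) - ((d - c) / 2) • (f c + f d)‖ ≤
      (d - c) / 2 * ∫ t in c..d, ‖f' t‖ := by
  rw [integral_sub_trapezoid_eq_neg_integral_smul_deriv_s17 hderiv hint, norm_neg,
    ← intervalIntegral.integral_const_mul]
  refine norm_integral_le_of_norm_le hcd (Filter.Eventually.of_forall fun t ht => ?_)
    (hint.norm.const_mul _)
  have hkernel : |t - (c + d) / 2| ≤ (d - c) / 2 :=
    abs_le.2 ⟨by linarith [ht.1], by linarith [ht.2]⟩
  rw [norm_smul, Real.norm_eq_abs]
  exact mul_le_mul_of_nonneg_right hkernel (norm_nonneg _)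

end Trapezoid

theorem stmt17 {X : Type*} [NormedAddCommGroup X] [NormedSpace ℝ X] [CompleteSpace X]
    {a b : ℝ} (hab : a < b) {f f' : ℝ → X}
    (hderiv : ∀ t ∈ Set.Icc a b, HasDerivAt f (f' t) t)
    (hint : IntervalIntegrable f' volume a b) :
    ‖(∫ t in a..b, f t) - (b - a) • ((4 : ℝ)⁻¹ • (f a + f b) + (2 : ℝ)⁻¹ • f ((a + b) / 2))‖ ≤
      (1 / 4) * (b - a) * (∫ t in a..b, ‖f' t‖) := by
  set m := (a + b) / 2 with hm_def
  have hderiv' : ∀ t ∈ Set.uIcc a b, HasDerivAt f (f' t) t := by rwa [Set.uIcc_of_le hab.le]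
  have ham : a ≤ m := by linarith [hm_def]
  have hmb : m ≤ b := by linarith [hm_def]
  have hm : m ∈ Set.uIcc a b := Set.uIcc_of_le hab.le ▸ ⟨ham, hmb⟩
  have hleft := Set.uIcc_subset_uIcc_left hm
  have hright := Set.uIcc_subset_uIcc_right hm
  have hf : ContinuousOn f (Set.uIcc a b) := fun t ht =>
    (hderiv' t ht).continuousAt.continuousWithinAt
  have hint_left := hint.mono_set hleft
  have hint_right := hint.mono_set hright
  have hE_left := norm_integral_sub_trapezoid_le ham
    (fun t ht => hderiv' t (hleft ht)) hint_left
  have hE_right := norm_integral_sub_trapezoid_le hmb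
    (fun t ht => hderiv' t (hright ht)) hint_right
  rw [← integral_add_adjacent_intervals (hf.mono hleft).intervalIntegrable
    (hf.mono hright).intervalIntegrable,
    ← integral_add_adjacent_intervals hint_left.norm hint_right.norm]
  calc _ = ‖((∫ t in a..m, f t) - ((m - a) / 2) • (f a + f m)) +
          ((∫ t in m..b, f t) - ((b - m) / 2) • (f m + f b))‖ := by
        congr 1
        rw [hm_def]
        module
    _ ≤ (m - a) / 2 * (∫ t in a..m, ‖f' t‖) + (b - m) / 2 * ∫ t in m..b, ‖f' t‖ :=
        (norm_add_le _ _).trans (add_le_add hE_left hE_right)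
    _ = _ := by rw [hm_def]; ring
end
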